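/- Let V be a real vector space of dimension n ≥ 2 and let ξ ⊂ V be a one-dimensional subspace. Then the intersection, over all hyperplanes Y ⊂ V complementary to ξ (i.e. V = ξ ⊕ Y), of the k-th exterior powers ⋀^k Y ⊂ ⋀^k V, is the zero subspace, for every 1 ≤ k ≤ n-1. -/

import Mathlib

/-!
An element `x` of `⋀^k V` vanishes as soon as all pairings `⟪φ₁ ∧ ⋯ ∧ φₖ, x⟫` with linear
forms `φᵢ` vanish. If `x ∈ ⋀^k Y`, such a pairing only depends on the restrictions of the `φᵢ`
to `Y`, and it is zero if one of them vanishes on `Y`.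

Fix a complement `Y` of `ξ`, a vector `v ≠ 0` in `ξ` and a form `f` with `f v = 1`, `f|_Y = 0`.
Replacing `φ₁` by `g = φ₁ ∘ (projection onto Y along ξ)` does not change the pairing with `x`.
The transvection `u ↦ u + g(u) v` maps `Y` to another complement `Y'` of `ξ`, on which `g`
and `f` agree; as `x ∈ ⋀^k Y'`, the pairing is unchanged when `g` is replaced by `f`, and it
then vanishes because `f|_Y = 0`.
-/

open Module

namespace exteriorPower

variable {R M N : Type*} [CommRing R] [AddCommGroup M] [Module R M] [AddCommGroup N] [Module R N]
  {n : ℕ}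

lemma coe_map_apply (f : M →ₗ[R] N) (x : ⋀[R]^n M) :
    (map n f x : ExteriorAlgebra R N) = ExteriorAlgebra.map f x := by
  suffices (⋀[R]^n N).subtype ∘ₗ map n f
      = (ExteriorAlgebra.map f).toLinearMap ∘ₗ (⋀[R]^n M).subtype from LinearMap.congr_fun this x
  refine linearMap_ext (AlternatingMap.ext fun m => ?_)
  simp [ExteriorAlgebra.map_apply_ιMulti, Function.comp_def]

lemma map_exteriorPower_eq_map_range (f : M →ₗ[R] N) :
    (⋀[R]^n M).map (ExteriorAlgebra.map f).toLinearMap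
      = (LinearMap.range (map n f)).map (⋀[R]^n N).subtype := by
  ext y
  constructor
  · rintro ⟨x, hx, rfl⟩
    exact ⟨map n f ⟨x, hx⟩, ⟨_, rfl⟩, coe_map_apply f ⟨x, hx⟩⟩
  · rintro ⟨_, ⟨x, rfl⟩, rfl⟩
    exact ⟨x, x.2, (coe_map_apply f x).symm⟩

lemma pairingDual_ιMulti_map (f : M →ₗ[R] N) (φ : Fin n → Dual R N) (x : ⋀[R]^n M) :
    pairingDual R N n (ιMulti R n φ) (map n f x)
      = pairingDual R M n (ιMulti R n fun i => φ i ∘ₗ f) x := by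
  suffices pairingDual R N n (ιMulti R n φ) ∘ₗ map n f
      = pairingDual R M n (ιMulti R n fun i => φ i ∘ₗ f) from LinearMap.congr_fun this x
  refine linearMap_ext (AlternatingMap.ext fun m => ?_)
  simp [pairingDual_ιMulti_ιMulti]

lemma pairingDual_ιMulti_update_map_congr (f : M →ₗ[R] N) (φ : Fin n → Dual R N) (i : Fin n)
    {a b : Dual R N} (hab : a ∘ₗ f = b ∘ₗ f) (x : ⋀[R]^n M) :
    pairingDual R N n (ιMulti R n (Function.update φ i a)) (map n f x)
      = pairingDual R N n (ιMulti R n (Function.update φ i b)) (map n f x) := by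
  simp only [pairingDual_ιMulti_map,
    Function.apply_update (fun _ (c : Dual R N) => c ∘ₗ f), hab]

lemma eq_zero_of_forall_pairingDual_ιMulti_eq_zero [Free R M] {x : ⋀[R]^n M}
    (hx : ∀ φ : Fin n → Dual R M, pairingDual R M n (ιMulti R n φ) x = 0) : x = 0 := by
  let : LinearOrder (Free.ChooseBasisIndex R M) := IsWellOrder.linearOrder WellOrderingRel
  refine ((Free.chooseBasis R M).exteriorPower n).forall_coord_eq_zero_iff.1 fun s => ?_
  rw [basis_coord]
  exact hx _

end exteriorPower

namespace Submodule

section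

variable {R V : Type*} [Ring R] [AddCommGroup V] [Module R V]

lemma isCompl_map_transvection {ξ Y : Submodule R V} (hY : IsCompl ξ Y) {v : V} (hv : v ∈ ξ)
    (g : Dual R V) : IsCompl ξ (Y.map (LinearMap.transvection g v)) := by
  constructor
  · rw [disjoint_def]
    rintro _ hw ⟨u, hu, rfl⟩
    have huξ : u ∈ ξ := by
      simpa [LinearMap.transvection.apply] using ξ.sub_mem hw (ξ.smul_mem (g u) hv)
    simp [disjoint_def.1 hY.disjoint u huξ hu]
  · rw [codisjoint_iff_le_sup]
    intro w _
    obtain ⟨a, ha, u, hu, rfl⟩ := mem_sup.1 (hY.sup_eq_top ▸ mem_top : w ∈ ξ ⊔ Y)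
    refine mem_sup.2 ⟨a - g u • v, ξ.sub_mem ha (ξ.smul_mem _ hv), _, mem_map_of_mem hu, ?_⟩
    rw [LinearMap.transvection.apply]
    abel

end

section

variable {K V : Type*} [Field K] [AddCommGroup V] [Module K V]

lemma exists_dual_eq_one_of_notMem {p : Submodule K V} {v : V} (hv : v ∉ p) :
    ∃ f : Dual K V, f v = 1 ∧ f ∘ₗ p.subtype = 0 := by
  obtain ⟨f, hfv, hfp⟩ := p.exists_dual_map_eq_bot_of_notMem hv inferInstance
  refine ⟨(f v)⁻¹ • f, by simp [hfv], ?_⟩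
  ext ⟨u, hu⟩
  have hfu : f u ∈ p.map f := mem_map_of_mem hu
  rw [hfp, mem_bot] at hfu
  simp [hfu]

end

end Submodule

namespace exteriorPower

open Submodule Function

variable {K V : Type*} [Field K] [AddCommGroup V] [Module K V] {ξ : Submodule K V} {k : ℕ}

theorem pairingDual_ιMulti_eq_zero_of_forall_isCompl (hξ : ξ ≠ ⊥) (hk : k ≠ 0)
    {x : ⋀[K]^k V} (hx : ∀ Y, IsCompl ξ Y → x ∈ LinearMap.range (map k Y.subtype))
    (φ : Fin k → Dual K V) : pairingDual K V k (ιMulti K k φ) x = 0 := by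
  obtain ⟨v, hvξ, hv⟩ := ξ.ne_bot_iff.1 hξ
  obtain ⟨Y, hY⟩ := ξ.exists_isCompl
  obtain ⟨f, hfv, hfY⟩ :=
    exists_dual_eq_one_of_notMem fun hvY => hv (disjoint_def.1 hY.disjoint v hvξ hvY)
  let i : Fin k := ⟨0, Nat.pos_of_ne_zero hk⟩
  let g := φ i ∘ₗ Y.projection ξ hY.symm
  have hgv : g v = 0 := by simp [g, projection_apply_of_mem_right hY.symm hvξ]
  obtain ⟨y, rfl⟩ := hx Y hY
  obtain ⟨y', hy'⟩ := hx _ (isCompl_map_transvection hY hvξ g)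
  calc pairingDual K V k (ιMulti K k φ) (map k Y.subtype y)
      = pairingDual K V k (ιMulti K k (update φ i g)) (map k Y.subtype y) := by
        rw [← pairingDual_ιMulti_update_map_congr _ _ i (a := φ i), update_eq_self]
        ext u
        simp [g]
    _ = pairingDual K V k (ιMulti K k (update φ i f)) (map k Y.subtype y) := by
        rw [← hy']
        refine pairingDual_ιMulti_update_map_congr _ _ _ (LinearMap.ext ?_) _
        rintro ⟨_, u, hu, rfl⟩
        have hfu : f u = 0 := LinearMap.congr_fun hfY ⟨u, hu⟩
        simp [LinearMap.transvection.apply, hgv, hfv, hfu]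
    _ = pairingDual K V k (ιMulti K k (update φ i 0)) (map k Y.subtype y) :=
        pairingDual_ιMulti_update_map_congr _ _ _ (by rw [hfY, LinearMap.zero_comp]) _
    _ = 0 := by rw [AlternatingMap.map_update_zero, map_zero, LinearMap.zero_apply]

theorem iInf_range_map_subtype_eq_bot (hξ : ξ ≠ ⊥) (hk : k ≠ 0) :
    ⨅ (Y : Submodule K V) (_ : IsCompl ξ Y), LinearMap.range (map k Y.subtype) = ⊥ :=
  eq_bot_iff.2 fun _ hx => (mem_bot K).2 <| eq_zero_of_forall_pairingDual_ιMulti_eq_zero <|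
    pairingDual_ιMulti_eq_zero_of_forall_isCompl hξ hk fun Y hY =>
      (mem_iInf _).1 ((mem_iInf _).1 hx Y) hY

theorem iInf_map_exteriorPower_eq_bot (hξ : ξ ≠ ⊥) (hk : k ≠ 0) :
    ⨅ (Y : Submodule K V) (_ : IsCompl ξ Y),
      (⋀[K]^k Y).map (ExteriorAlgebra.map Y.subtype).toLinearMap = ⊥ := by
  have : Nonempty {Y // IsCompl ξ Y} := nonempty_subtype.2 ξ.exists_isCompl
  simp_rw [map_exteriorPower_eq_map_range, iInf_subtype']
  rw [← Submodule.map_iInf _ (⋀[K]^k V).injective_subtype,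
    ← iInf_subtype' (p := (IsCompl ξ ·)) (f := fun Y _ => LinearMap.range (map k Y.subtype)),
    iInf_range_map_subtype_eq_bot hξ hk, Submodule.map_bot]

end exteriorPower

theorem stmt0_general {V : Type*} [AddCommGroup V] [Module ℝ V]
    (ξ : Submodule ℝ V) (hξ : Module.finrank ℝ ξ = 1)
    (k : ℕ) (hk1 : 1 ≤ k) :
    ⨅ (Y : Submodule ℝ V) (_ : IsCompl ξ Y),
      Submodule.map (ExteriorAlgebra.map (Y.subtype)).toLinearMap (⋀[ℝ]^k ↥Y) = ⊥ :=
  exteriorPower.iInf_map_exteriorPower_eq_bot (by rintro rfl; simp at hξ) (by omega)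

/-- For a line `ξ` in an `n`-dimensional real vector space `V` (`n ≥ 2`) and
`1 ≤ k ≤ n-1`, the intersection over all complementary hyperplanes `Y` of the images
of `⋀^k Y` inside `⋀^k V` (viewed inside the exterior algebra of `V`) is zero. -/
theorem stmt0 {V : Type*} [AddCommGroup V] [Module ℝ V] [FiniteDimensional ℝ V]
    {n : ℕ} (hn : 2 ≤ n) (hdim : Module.finrank ℝ V = n)
    (ξ : Submodule ℝ V) (hξ : Module.finrank ℝ ξ = 1)
    (k : ℕ) (hk1 : 1 ≤ k) (hk2 : k ≤ n - 1) :
    ⨅ (Y : Submodule ℝ V) (_ : IsCompl ξ Y),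
      Submodule.map (ExteriorAlgebra.map (Y.subtype)).toLinearMap (⋀[ℝ]^k ↥Y) = ⊥ :=
  stmt0_general ξ hξ k hk1
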